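/- Let f : c([0,1]) → Y be a map to a metric space Y such that for every K > 0 there is L_K > 0 with d(f(x,t), f(x',t')) ≤ L_K · d((x,t),(x',t')) whenever x, x', t, t' ∈ [0,K]. Then there exists a coarse map g : c([0,1]) → c([0,1]) of the form g(x,t) = (ρ(x), t·ρ(x)/x) for a monotone surjective ρ : [0,∞) → [0,∞), such that f ∘ g is 1-Lipschitz and g is coarsely homotopic to the identity. -/

import Mathlib

open Metric Bornology Set

noncomputable section

/-- The metric cone over `[0,1]`: `c([0,1]) = {(x,t) : 0 ≤ t ≤ x} ⊆ ℝ²` with the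
Euclidean metric. -/
def c01 : Set (EuclideanSpace ℝ (Fin 2)) := {v | 0 ≤ v 1 ∧ v 1 ≤ v 0}

/-- A map between metric spaces is bornologous if it admits a control function. -/
def Bornologous {X Y : Type*} [PseudoMetricSpace X] [PseudoMetricSpace Y]
    (f : X → Y) : Prop :=
  ∃ ρ : ℝ → ℝ, ∀ x x', dist (f x) (f x') ≤ ρ (dist x x')

/-- A map is coarse if it is bornologous and preimages of bounded sets are bounded. -/
def CoarseMap {X Y : Type*} [PseudoMetricSpace X] [PseudoMetricSpace Y]
    (f : X → Y) : Prop :=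
  Bornologous f ∧ ∀ B : Set Y, Bornology.IsBounded B → Bornology.IsBounded (f ⁻¹' B)

/-- The `p`-cylinder `I_p X = {(x,s) ∈ X × [0,∞) : s ≤ p(x)+1}` with the `ℓ²` product
metric. -/
def Cyl {X : Type*} [MetricSpace X] (p : X → ℝ) : Type _ :=
  {q : WithLp 2 (X × ℝ) // 0 ≤ q.ofLp.2 ∧ q.ofLp.2 ≤ p q.ofLp.1 + 1}

instance {X : Type*} [MetricSpace X] (p : X → ℝ) : MetricSpace (Cyl p) := by
  unfold Cyl; infer_instance

/-- The bottom inclusion `i₀ : X → I_p X`. -/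
def cylI0 {X : Type*} [MetricSpace X] {p : X → ℝ} (hp : ∀ x, -1 ≤ p x) (x : X) :
    Cyl p :=
  ⟨WithLp.toLp 2 (x, 0), le_rfl, by have := hp x; dsimp; linarith⟩

/-- The top inclusion `i₁ : X → I_p X`. -/
def cylI1 {X : Type*} [MetricSpace X] {p : X → ℝ} (hp : ∀ x, -1 ≤ p x) (x : X) :
    Cyl p :=
  ⟨WithLp.toLp 2 (x, p x + 1), by have := hp x; dsimp; constructor <;> linarith⟩

/-! Pick Lipschitz constants `L K` for `f` below height `K`, monotone in `K`. The
reparametrization `ρ` interpolates a sequence `a n` that climbs so slowly that on `[n, n + 1]`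
both its slope and the ratio `ρ x / x` are at most `δ = (5 L (a (n + 1)))⁻¹`. The radial
rescaling `g q = (ρ q₀ / q₀) • q` is then `5 δ`-Lipschitz on that band and lands below height
`a (n + 1)`, so `f ∘ g` is `1`-Lipschitz on every band, hence everywhere since the cone is convex.
As `ρ` has slope at most `1 / 2` and is unbounded, `g` is coarse, and sliding each point radially
inward at unit speed from `q` to `g q` is a coarse homotopy over the cylinder of
`p q = q₀ - ρ q₀`. -/
open Filter

local notation "ℝ²" => EuclideanSpace ℝ (Fin 2)

theorem forall_le_of_bands {P : ℝ → ℝ → Prop}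
    (trans : ∀ x y z, x ≤ y → y ≤ z → P x y → P y z → P x z)
    (low : ∀ x y, x ≤ y → y ≤ 1 → P x y)
    (band : ∀ n : ℕ, ∀ x y, (n : ℝ) ≤ x → x ≤ y → y ≤ n + 1 → P x y) :
    ∀ x y, x ≤ y → P x y := by
  have up_to : ∀ k : ℕ, ∀ x y : ℝ, x ≤ y → y ≤ k + 1 → P x y := by
    intro k
    induction k with
    | zero => simpa using low
    | succ k ih =>
      intro x y hxy hy
      push_cast at hy ⊢
      rcases le_or_gt y (k + 1) with hyk | hyk
      · exact ih x y hxy hyk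
      rcases le_or_gt ((k : ℝ) + 1) x with hxk | hxk
      · exact band (k + 1) x y (by push_cast; exact hxk) hxy (by push_cast; exact hy)
      · exact trans x (k + 1) y hxk.le hyk.le (ih x _ hxk.le le_rfl)
          (band (k + 1) _ y (by push_cast; rfl) hyk.le (by push_cast; exact hy))
  exact fun x y hxy => up_to ⌈y⌉₊ x y hxy (by linarith [Nat.le_ceil y])

/-- Affine on each `[n, n + 1]`, and also on `(-∞, 1]` because `⌊x⌋₊ = 0` for `x < 0`. -/
def interpolate (a : ℕ → ℝ) (x : ℝ) : ℝ :=
  a ⌊x⌋₊ + (a (⌊x⌋₊ + 1) - a ⌊x⌋₊) * (x - ⌊x⌋₊)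

section interpolate

variable {a : ℕ → ℝ}

theorem interpolate_of_mem_Icc {n : ℕ} {x : ℝ} (h₁ : (n : ℝ) ≤ x) (h₂ : x ≤ n + 1) :
    interpolate a x = a n + (a (n + 1) - a n) * (x - n) := by
  rcases h₂.lt_or_eq with h₂ | rfl
  · rw [interpolate, (Nat.floor_eq_iff (n.cast_nonneg.trans h₁)).2 ⟨h₁, h₂⟩]
  · rw [interpolate, show ⌊(n : ℝ) + 1⌋₊ = n + 1 by exact_mod_cast Nat.floor_natCast (n + 1)]
    push_cast
    ring

theorem interpolate_natCast (n : ℕ) : interpolate a n = a n := by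
  simp [interpolate_of_mem_Icc le_rfl (le_add_of_nonneg_right zero_le_one)]

theorem interpolate_of_le_one {x : ℝ} (hx : x ≤ 1) :
    interpolate a x = a 0 + (a 1 - a 0) * x := by
  rcases le_or_gt 0 x with h | h
  · simpa using interpolate_of_mem_Icc (a := a) (n := 0) (by simpa) (by simpa)
  · simp [interpolate, Nat.floor_of_nonpos h.le]

theorem interpolate_sub_mem_Icc {C : ℝ} (ha : ∀ n, a (n + 1) - a n ∈ Icc 0 C) {x y : ℝ}
    (hxy : x ≤ y) : interpolate a y - interpolate a x ∈ Icc 0 (C * (y - x)) := by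
  have slope : ∀ {x y s : ℝ}, x ≤ y → s ∈ Icc 0 C → s * (y - x) ∈ Icc 0 (C * (y - x)) :=
    fun hxy hs => ⟨mul_nonneg hs.1 (sub_nonneg.2 hxy),
      mul_le_mul_of_nonneg_right hs.2 (sub_nonneg.2 hxy)⟩
  refine forall_le_of_bands
    (P := fun x y => interpolate a y - interpolate a x ∈ Icc 0 (C * (y - x)))
    (fun x y z _ _ hxy hyz => ⟨by linarith [hxy.1, hyz.1], by linarith [hxy.2, hyz.2]⟩)
    (fun x y hxy hy => ?_) (fun n x y hx hxy hy => ?_) x y hxy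
  · rw [interpolate_of_le_one hy, interpolate_of_le_one (hxy.trans hy)]
    convert slope hxy (ha 0) using 1
    simp only [zero_add]
    ring
  · rw [interpolate_of_mem_Icc (hx.trans hxy) hy, interpolate_of_mem_Icc hx (hxy.trans hy)]
    convert slope hxy (ha n) using 1
    ring

end interpolate

/-- The heights `a n` of the slow reparametrization at the integers. The sequence only climbs,
by `δ (a n + 1)`, once `n` is so large that `a n + 1 ≤ n * δ (a n + 1)`; this keeps the ratio
`a (n + 1) / n` below the admissible slope `δ (a (n + 1))` (`slowSeq_succ_le`). -/
def slowSeq (δ : ℝ → ℝ) : ℕ → ℝ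
  | 0 => 0
  | n + 1 => slowSeq δ n +
      if slowSeq δ n + 1 ≤ n * δ (slowSeq δ n + 1) then δ (slowSeq δ n + 1) else 0

section slowSeq

variable {δ : ℝ → ℝ}

theorem slowSeq_succ_eq_or (n : ℕ) :
    slowSeq δ (n + 1) = slowSeq δ n ∨
      slowSeq δ n + 1 ≤ n * δ (slowSeq δ n + 1) ∧
        slowSeq δ (n + 1) = slowSeq δ n + δ (slowSeq δ n + 1) := by
  simp only [slowSeq]
  split_ifs with h
  · exact Or.inr ⟨h, rfl⟩
  · exact Or.inl (add_zero _)

theorem slowSeq_le_succ (hδ₀ : ∀ a, 0 ≤ δ a) (n : ℕ) : slowSeq δ n ≤ slowSeq δ (n + 1) := by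
  rcases slowSeq_succ_eq_or (δ := δ) n with h | ⟨-, h⟩ <;> linarith [hδ₀ (slowSeq δ n + 1)]

theorem slowSeq_succ_sub_le (hδ : Antitone δ) (hδ₀ : ∀ a, 0 ≤ δ a) (hδ₁ : ∀ a, δ a ≤ 1)
    (n : ℕ) : slowSeq δ (n + 1) - slowSeq δ n ≤ δ (slowSeq δ (n + 1)) := by
  rcases slowSeq_succ_eq_or (δ := δ) n with h | ⟨-, h⟩
  · linarith [hδ₀ (slowSeq δ (n + 1))]
  · have := hδ (show slowSeq δ (n + 1) ≤ slowSeq δ n + 1 by linarith [hδ₁ (slowSeq δ n + 1)])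
    linarith

theorem slowSeq_succ_le (hδ : Antitone δ) (hδ₀ : ∀ a, 0 ≤ δ a) (hδ₁ : ∀ a, δ a ≤ 1)
    (n : ℕ) : slowSeq δ (n + 1) ≤ n * δ (slowSeq δ (n + 1)) := by
  induction n with
  | zero => simp [slowSeq, show ¬(1 : ℝ) ≤ 0 by norm_num]
  | succ n ih =>
    push_cast
    rcases slowSeq_succ_eq_or (δ := δ) (n + 1) with h | ⟨hstep, h⟩
    · rw [h]
      nlinarith [hδ₀ (slowSeq δ (n + 1))]
    · have hle : slowSeq δ (n + 1 + 1) ≤ slowSeq δ (n + 1) + 1 := by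
        linarith [hδ₁ (slowSeq δ (n + 1) + 1)]
      have := mul_le_mul_of_nonneg_left (hδ hle) (by positivity : (0 : ℝ) ≤ n + 1)
      push_cast at hstep
      linarith

theorem slowSeq_succ_of_le {n : ℕ} (h : slowSeq δ n + 1 ≤ n * δ (slowSeq δ n + 1)) :
    slowSeq δ (n + 1) = slowSeq δ n + δ (slowSeq δ n + 1) := by
  simp only [slowSeq, if_pos h]

theorem exists_le_slowSeq (hδ : Antitone δ) (hδ₀ : ∀ a, 0 < δ a) (y : ℝ) :
    ∃ n, y ≤ slowSeq δ n := by
  by_contra! hlt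
  set η := δ (y + 1)
  have hη : 0 < η := hδ₀ _
  have hδη : ∀ n, η ≤ δ (slowSeq δ n + 1) := fun n => hδ (by linarith [hlt n])
  obtain ⟨N, hN⟩ := exists_nat_ge ((y + 1) / η)
  rw [div_le_iff₀ hη] at hN
  -- past time `N`, the bound `slowSeq δ n < y` forces the sequence to climb at every step
  have climb : ∀ k : ℕ, k * η ≤ slowSeq δ (N + k) - slowSeq δ N := by
    intro k
    induction k with
    | zero => simp
    | succ k ih =>
      have hstep : slowSeq δ (N + k) + 1 ≤ (N + k : ℕ) * δ (slowSeq δ (N + k) + 1) := by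
        push_cast
        nlinarith [hlt (N + k), hδη (N + k)]
      rw [← add_assoc, slowSeq_succ_of_le hstep]
      push_cast
      linarith [hδη (N + k)]
  obtain ⟨k, hk⟩ := exists_nat_ge ((y - slowSeq δ N) / η)
  rw [div_le_iff₀ hη] at hk
  linarith [climb k, hlt (N + k)]

end slowSeq

structure IsSlowReparam (ρ : ℝ → ℝ) : Prop where
  monotone : Monotone ρ
  map_zero : ρ 0 = 0
  sub_le_half : ∀ ⦃x y⦄, x ≤ y → ρ y - ρ x ≤ (y - x) / 2
  tendsto_atTop : Tendsto ρ atTop atTop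

namespace IsSlowReparam

variable {ρ : ℝ → ℝ} (hρ : IsSlowReparam ρ)
include hρ

theorem nonneg {x : ℝ} (hx : 0 ≤ x) : 0 ≤ ρ x :=
  hρ.map_zero ▸ hρ.monotone hx

theorem le_half {x : ℝ} (hx : 0 ≤ x) : ρ x ≤ x / 2 := by
  simpa [hρ.map_zero] using hρ.sub_le_half hx

theorem abs_sub_le (x y : ℝ) : |ρ x - ρ y| ≤ |x - y| / 2 := by
  wlog hxy : x ≤ y generalizing x y
  · rw [abs_sub_comm, abs_sub_comm x]
    exact this y x (le_of_not_ge hxy)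
  rw [abs_sub_comm, abs_of_nonneg (sub_nonneg.2 (hρ.monotone hxy)),
    abs_sub_comm, abs_of_nonneg (sub_nonneg.2 hxy)]
  exact hρ.sub_le_half hxy

theorem continuous : Continuous ρ :=
  (LipschitzWith.of_dist_le' (K := 1 / 2) fun x y => by
    simpa [Real.dist_eq, div_eq_inv_mul] using hρ.abs_sub_le x y).continuous

theorem exists_eq {y : ℝ} (hy : 0 ≤ y) : ∃ x, 0 ≤ x ∧ ρ x = y := by
  obtain ⟨N, hN⟩ := eventually_atTop.1 (Filter.tendsto_atTop.1 hρ.tendsto_atTop y)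
  obtain ⟨x, hx, rfl⟩ := intermediate_value_Icc (le_max_right N 0) hρ.continuous.continuousOn
    ⟨by rwa [hρ.map_zero], hN _ (le_max_left N 0)⟩
  exact ⟨x, hx.1, rfl⟩

theorem exists_le_of_le (r : ℝ) : ∃ N, ∀ x, ρ x ≤ r → x ≤ N := by
  obtain ⟨N, hN⟩ := eventually_atTop.1 (Filter.tendsto_atTop.1 hρ.tendsto_atTop (r + 1))
  exact ⟨N, fun x hx => le_of_not_gt fun hNx => by linarith [hN x hNx.le]⟩

end IsSlowReparam

theorem isSlowReparam_interpolate_slowSeq {δ : ℝ → ℝ} (hδ : Antitone δ) (hδ₀ : ∀ a, 0 < δ a)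
    (hδ₁ : ∀ a, δ a ≤ 1 / 2) : IsSlowReparam (interpolate (slowSeq δ)) := by
  have hδ₀' : ∀ a, 0 ≤ δ a := fun a => (hδ₀ a).le
  have steps : ∀ n, slowSeq δ (n + 1) - slowSeq δ n ∈ Icc 0 (1 / 2) := fun n =>
    ⟨sub_nonneg.2 (slowSeq_le_succ hδ₀' n), (slowSeq_succ_sub_le hδ hδ₀'
      (fun a => (hδ₁ a).trans (by norm_num)) n).trans (hδ₁ _)⟩
  have hmono : Monotone (interpolate (slowSeq δ)) := fun x y hxy =>
    sub_nonneg.1 (interpolate_sub_mem_Icc steps hxy).1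
  refine ⟨hmono, by simpa [slowSeq] using interpolate_natCast (a := slowSeq δ) 0,
    fun x y hxy => by linarith [(interpolate_sub_mem_Icc steps hxy).2], ?_⟩
  refine tendsto_atTop_atTop_of_monotone hmono fun y => ?_
  obtain ⟨n, hn⟩ := exists_le_slowSeq hδ hδ₀ y
  exact ⟨n, by rwa [interpolate_natCast]⟩

section band

variable {δ : ℝ → ℝ} {n : ℕ} {x y : ℝ}

theorem interpolate_slowSeq_le_mul (hδ : Antitone δ) (hδ₀ : ∀ a, 0 ≤ δ a) (hδ₁ : ∀ a, δ a ≤ 1)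
    (h₁ : (n : ℝ) ≤ x) (h₂ : x ≤ n + 1) :
    interpolate (slowSeq δ) x ≤ δ (slowSeq δ (n + 1)) * x := by
  rw [interpolate_of_mem_Icc h₁ h₂]
  nlinarith [slowSeq_le_succ hδ₀ n, slowSeq_succ_le hδ hδ₀ hδ₁ n, hδ₀ (slowSeq δ (n + 1))]

theorem abs_interpolate_slowSeq_sub_le (hδ : Antitone δ) (hδ₀ : ∀ a, 0 ≤ δ a)
    (hδ₁ : ∀ a, δ a ≤ 1) (hx : x ∈ Icc (n : ℝ) (n + 1)) (hy : y ∈ Icc (n : ℝ) (n + 1)) :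
    |interpolate (slowSeq δ) x - interpolate (slowSeq δ) y| ≤
      δ (slowSeq δ (n + 1)) * |x - y| := by
  rw [interpolate_of_mem_Icc hx.1 hx.2, interpolate_of_mem_Icc hy.1 hy.2,
    show ∀ a b : ℝ, a + b * (x - n) - (a + b * (y - n)) = b * (x - y) by intros; ring,
    abs_mul, abs_of_nonneg (sub_nonneg.2 (slowSeq_le_succ hδ₀ n))]
  exact mul_le_mul_of_nonneg_right (slowSeq_succ_sub_le hδ hδ₀ hδ₁ n) (abs_nonneg _)

end band

theorem norm_smul_sub_smul_le {𝕜 E : Type*} [NormedField 𝕜] [SeminormedAddCommGroup E]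
    [NormedSpace 𝕜 E] (a b : 𝕜) (u v : E) :
    ‖a • u - b • v‖ ≤ ‖b‖ * ‖u - v‖ + ‖a - b‖ * ‖u‖ := by
  rw [show a • u - b • v = b • (u - v) + (a - b) • u by simp only [smul_sub, sub_smul]; abel]
  exact (norm_add_le _ _).trans (by rw [norm_smul, norm_smul])

theorem abs_sub_apply_le_dist {ι : Type*} [Fintype ι] (u v : EuclideanSpace ℝ ι) (i : ι) :
    |u i - v i| ≤ dist u v := by
  simpa [Real.dist_eq] using PiLp.dist_apply_le u v i

theorem div_smul_apply {ι : Type*} {v : EuclideanSpace ℝ ι} {i : ι} {R : ℝ}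
    (h : v i = 0 → R = 0) : ((R / v i) • v) i = R := by
  simpa using div_mul_cancel_of_imp h

section cone

variable {u v : ℝ²}

theorem nonneg_of_mem_c01 (hv : v ∈ c01) : 0 ≤ v 0 := hv.1.trans hv.2

theorem convex_c01 : Convex ℝ c01 := by
  rintro u ⟨hu₁, hu₂⟩ v ⟨hv₁, hv₂⟩ a b ha hb -
  refine ⟨?_, ?_⟩ <;> simp only [PiLp.add_apply, PiLp.smul_apply, smul_eq_mul] <;> nlinarith

theorem smul_mem_c01 {c : ℝ} (hc : 0 ≤ c) (hv : v ∈ c01) : c • v ∈ c01 :=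
  ⟨by simpa using mul_nonneg hc hv.1, by simpa using mul_le_mul_of_nonneg_left hv.2 hc⟩

theorem norm_le_of_mem_c01 (hv : v ∈ c01) : ‖v‖ ≤ 2 * v 0 := by
  rw [EuclideanSpace.norm_eq, Real.sqrt_le_left (by linarith [nonneg_of_mem_c01 hv])]
  simp only [Fin.sum_univ_two, Real.norm_eq_abs, sq_abs]
  nlinarith [hv.1, hv.2]


theorem div_self_smul_of_mem_c01 (hv : v ∈ c01) : (v 0 / v 0) • v = v := by
  by_cases h : v 0 = 0
  · have h1 : v 1 = 0 := le_antisymm (h ▸ hv.2) hv.1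
    ext i
    fin_cases i <;> simp [h, h1]
  · rw [div_self h, one_smul]

theorem dist_div_smul_le (hu : u ∈ c01) (hv : v ∈ c01) {R S k : ℝ} (hk : 0 ≤ k) (hR : 0 ≤ R)
    (hRk : R ≤ k * u 0) (hS : 0 ≤ S) (hSk : S ≤ k * v 0) :
    dist ((R / u 0) • u) ((S / v 0) • v) ≤ 3 * k * dist u v + 2 * |R - S| := by
  have hu₀ := nonneg_of_mem_c01 hu
  have hv₀ := nonneg_of_mem_c01 hv
  have hμ : S / v 0 ≤ k := div_le_of_le_mul₀ hv₀ hk hSk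
  have hμ₀ : 0 ≤ S / v 0 := div_nonneg hS hv₀
  have hRu : R / u 0 * u 0 = R := div_mul_cancel_of_imp fun h => by nlinarith
  have hSv : S / v 0 * v 0 = S := div_mul_cancel_of_imp fun h => by nlinarith
  have hratio : |R / u 0 - S / v 0| * u 0 ≤ |R - S| + k * dist u v := by
    rw [← abs_of_nonneg hu₀, ← abs_mul, abs_of_nonneg hu₀, sub_mul, hRu,
      show R - S / v 0 * u 0 = (R - S) + S / v 0 * (v 0 - u 0) by rw [mul_sub, hSv]; ring]
    refine (abs_add_le _ _).trans (add_le_add_right ?_ _)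
    rw [abs_mul, abs_of_nonneg hμ₀, abs_sub_comm]
    exact mul_le_mul hμ (abs_sub_apply_le_dist u v 0) (abs_nonneg _) hk
  rw [dist_eq_norm]
  refine (norm_smul_sub_smul_le _ _ u v).trans ?_
  rw [Real.norm_eq_abs, Real.norm_eq_abs, abs_of_nonneg hμ₀, ← dist_eq_norm]
  have := mul_le_mul_of_nonneg_left (norm_le_of_mem_c01 hu) (abs_nonneg (R / u 0 - S / v 0))
  nlinarith [dist_nonneg (x := u) (y := v)]

theorem isBounded_of_forall_apply_le {S : Set c01} {N : ℝ} (h : ∀ q ∈ S, (q : ℝ²) 0 ≤ N) :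
    IsBounded S := by
  refine Metric.isBounded_iff.2 ⟨4 * N, fun q hq q' hq' => ?_⟩
  rw [Subtype.dist_eq]
  linarith [dist_le_norm_add_norm (q : ℝ²) q', norm_le_of_mem_c01 q.2, norm_le_of_mem_c01 q'.2,
    h q hq, h q' hq']

theorem exists_forall_apply_le_of_isBounded {B : Set c01} (hB : IsBounded B) :
    ∃ r, ∀ q ∈ B, (q : ℝ²) 0 ≤ r := by
  obtain ⟨r, hr⟩ :=
    isBounded_iff_forall_norm_le.1 (isometry_subtype_coe.lipschitz.isBounded_image hB)
  exact ⟨r, fun q hq => (le_abs_self _).trans ((PiLp.norm_apply_le (q : ℝ²) 0).trans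
    (hr _ (mem_image_of_mem _ hq)))⟩

end cone

section cylinder

variable {X : Type*} [MetricSpace X] {p : X → ℝ}

theorem Cyl.dist_fst_le (w w' : Cyl p) : dist w.1.fst w'.1.fst ≤ dist w w' :=
  WithLp.dist_fst_le _ _

theorem Cyl.abs_sub_snd_le (w w' : Cyl p) : |w.1.snd - w'.1.snd| ≤ dist w w' :=
  WithLp.dist_snd_le w.1 w'.1

theorem Cyl.snd_nonneg (w : Cyl p) : 0 ≤ w.1.snd := w.2.1

theorem Cyl.snd_le (w : Cyl p) : w.1.snd ≤ p w.1.fst + 1 := w.2.2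

theorem Cyl.isBounded_of_forall {S : Set (Cyl p)} {T : Set X} (hT : IsBounded T) {M : ℝ}
    (h : ∀ w ∈ S, w.1.fst ∈ T ∧ w.1.snd ≤ M) : IsBounded S :=
  ((WithLp.prod_antilipschitzWith_ofLp 2 X ℝ).comp isometry_subtype_coe.antilipschitz
    |>.isBounded_preimage (hT.prod (isBounded_Icc 0 M))).subset
    fun w hw => ⟨(h w hw).1, w.2.1, (h w hw).2⟩

end cylinder

def CoarselyHomotopic {X Y : Type*} [MetricSpace X] [MetricSpace Y] (g₀ g₁ : X → Y) : Prop :=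
  ∃ p : X → ℝ, ∃ hp : ∀ x, -1 ≤ p x, CoarseMap p ∧
    ∃ H : Cyl p → Y, CoarseMap H ∧ (∀ x, H (cylI0 hp x) = g₀ x) ∧ (∀ x, H (cylI1 hp x) = g₁ x)

section reparam

variable {ρ : ℝ → ℝ} (hρ : IsSlowReparam ρ)

/-- `g(x, t) = (ρ x, t ρ(x) / x)`, written as the radial rescaling `q ↦ (ρ(q₀) / q₀) • q`. -/
def coneReparam (q : c01) : c01 :=
  ⟨(ρ ((q : ℝ²) 0) / (q : ℝ²) 0) • (q : ℝ²),
    smul_mem_c01 (div_nonneg (hρ.nonneg (nonneg_of_mem_c01 q.2)) (nonneg_of_mem_c01 q.2)) q.2⟩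

include hρ

theorem coneReparam_apply_zero (q : c01) :
    (coneReparam hρ q : ℝ²) 0 = ρ ((q : ℝ²) 0) :=
  div_smul_apply fun h => by rw [h, hρ.map_zero]

theorem coneReparam_apply_one (q : c01) :
    (coneReparam hρ q : ℝ²) 1 = (q : ℝ²) 1 * ρ ((q : ℝ²) 0) / (q : ℝ²) 0 := by
  simp only [coneReparam, PiLp.smul_apply, smul_eq_mul]
  ring

theorem dist_coneReparam_le {k : ℝ} (hk : 0 ≤ k) {u v : c01} (hu : ρ ((u : ℝ²) 0) ≤ k * (u : ℝ²) 0)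
    (hv : ρ ((v : ℝ²) 0) ≤ k * (v : ℝ²) 0)
    (huv : |ρ ((u : ℝ²) 0) - ρ ((v : ℝ²) 0)| ≤ k * |(u : ℝ²) 0 - (v : ℝ²) 0|) :
    dist (coneReparam hρ u) (coneReparam hρ v) ≤ 5 * k * dist u v := by
  have hdist := dist_div_smul_le u.2 v.2 hk (hρ.nonneg (nonneg_of_mem_c01 u.2)) hu
    (hρ.nonneg (nonneg_of_mem_c01 v.2)) hv
  have := mul_le_mul_of_nonneg_left (abs_sub_apply_le_dist (u : ℝ²) v 0) hk
  rw [Subtype.dist_eq, Subtype.dist_eq]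
  exact hdist.trans (by linarith)

theorem coarseMap_coneReparam : CoarseMap (coneReparam hρ) := by
  refine ⟨⟨fun d => 5 * d, fun u v => ?_⟩, fun B hB => ?_⟩
  · have hle : ∀ x, 0 ≤ x → ρ x ≤ 1 * x := fun x hx => by linarith [hρ.le_half hx]
    simpa using dist_coneReparam_le hρ zero_le_one (hle _ (nonneg_of_mem_c01 u.2))
      (hle _ (nonneg_of_mem_c01 v.2))
      (by linarith [hρ.abs_sub_le ((u : ℝ²) 0) ((v : ℝ²) 0), abs_nonneg ((u : ℝ²) 0 - (v : ℝ²) 0)])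
  · obtain ⟨r, hr⟩ := exists_forall_apply_le_of_isBounded hB
    obtain ⟨N, hN⟩ := hρ.exists_le_of_le r
    exact isBounded_of_forall_apply_le fun q hq => hN _ (coneReparam_apply_zero hρ q ▸ hr _ hq)

end reparam

section homotopy

variable {ρ : ℝ → ℝ} (hρ : IsSlowReparam ρ)

def reparamDelay (ρ : ℝ → ℝ) (q : c01) : ℝ := (q : ℝ²) 0 - ρ ((q : ℝ²) 0)

/-- The radial coordinate of the homotopy: `q` moves towards the apex at unit speed until its
radial coordinate has come down to `ρ(q₀)`, which takes time `reparamDelay ρ q`. -/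
def homotopyRadius (ρ : ℝ → ℝ) (w : Cyl (reparamDelay ρ)) : ℝ :=
  max (ρ ((w.1.fst : ℝ²) 0)) ((w.1.fst : ℝ²) 0 - w.1.snd)

include hρ in
theorem homotopyRadius_nonneg (w : Cyl (reparamDelay ρ)) : 0 ≤ homotopyRadius ρ w :=
  le_max_of_le_left (hρ.nonneg (nonneg_of_mem_c01 w.1.fst.2))

def coneHomotopy (w : Cyl (reparamDelay ρ)) : c01 :=
  ⟨(homotopyRadius ρ w / (w.1.fst : ℝ²) 0) • (w.1.fst : ℝ²),
    smul_mem_c01 (div_nonneg (homotopyRadius_nonneg hρ w) (nonneg_of_mem_c01 w.1.fst.2)) w.1.fst.2⟩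

include hρ

theorem half_le_reparamDelay (q : c01) : (q : ℝ²) 0 / 2 ≤ reparamDelay ρ q := by
  rw [reparamDelay]
  linarith [hρ.le_half (nonneg_of_mem_c01 q.2)]

theorem coarseMap_reparamDelay : CoarseMap (reparamDelay ρ) := by
  refine ⟨⟨fun d => 2 * d, fun u v => ?_⟩, fun B hB => ?_⟩
  · rw [Real.dist_eq, reparamDelay, reparamDelay, Subtype.dist_eq]
    have hx := abs_sub_apply_le_dist (u : ℝ²) v 0
    obtain ⟨hρ₁, hρ₂⟩ := abs_le.1 (hρ.abs_sub_le ((u : ℝ²) 0) ((v : ℝ²) 0))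
    refine abs_le.2 ⟨?_, ?_⟩ <;>
      linarith [le_abs_self ((u : ℝ²) 0 - (v : ℝ²) 0), neg_abs_le ((u : ℝ²) 0 - (v : ℝ²) 0)]
  · obtain ⟨r, hr⟩ := hB.bddAbove
    exact isBounded_of_forall_apply_le (N := 2 * r) fun q hq => by
      linarith [hr hq, half_le_reparamDelay hρ q]

theorem homotopyRadius_le (w : Cyl (reparamDelay ρ)) : homotopyRadius ρ w ≤ (w.1.fst : ℝ²) 0 :=
  have hx := nonneg_of_mem_c01 w.1.fst.2
  max_le (by linarith [hρ.le_half hx]) (by linarith [Cyl.snd_nonneg w])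

theorem abs_homotopyRadius_sub_le (w w' : Cyl (reparamDelay ρ)) :
    |homotopyRadius ρ w - homotopyRadius ρ w'| ≤ 2 * dist w w' := by
  have hx := (abs_sub_apply_le_dist (w.1.fst : ℝ²) w'.1.fst 0).trans (Cyl.dist_fst_le w w')
  have hs := Cyl.abs_sub_snd_le w w'
  refine (abs_max_sub_max_le_max _ _ _ _).trans (max_le ?_ ?_)
  · exact (hρ.abs_sub_le _ _).trans (by linarith [abs_nonneg (w.1.snd - w'.1.snd)])
  · obtain ⟨hx₁, hx₂⟩ := abs_le.1 hx
    obtain ⟨hs₁, hs₂⟩ := abs_le.1 hs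
    exact abs_le.2 ⟨by linarith, by linarith⟩

theorem coneHomotopy_apply_zero (w : Cyl (reparamDelay ρ)) :
    (coneHomotopy hρ w : ℝ²) 0 = homotopyRadius ρ w :=
  div_smul_apply fun h => le_antisymm (h ▸ homotopyRadius_le hρ w) (homotopyRadius_nonneg hρ w)

theorem coarseMap_coneHomotopy : CoarseMap (coneHomotopy hρ) := by
  refine ⟨⟨fun d => 7 * d, fun w w' => ?_⟩, fun B hB => ?_⟩
  · have hdist := dist_div_smul_le w.1.fst.2 w'.1.fst.2 zero_le_one (homotopyRadius_nonneg hρ w)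
      (by simpa using homotopyRadius_le hρ w) (homotopyRadius_nonneg hρ w')
      (by simpa using homotopyRadius_le hρ w')
    have := abs_homotopyRadius_sub_le hρ w w'
    have := Cyl.dist_fst_le w w'
    rw [Subtype.dist_eq] at this ⊢
    exact hdist.trans (by linarith)
  · obtain ⟨r, hr⟩ := exists_forall_apply_le_of_isBounded hB
    obtain ⟨N, hN⟩ := hρ.exists_le_of_le r
    have hxN : ∀ w ∈ coneHomotopy hρ ⁻¹' B, (w.1.fst : ℝ²) 0 ≤ N := fun w hw =>
      hN _ ((le_max_left _ _).trans ((coneHomotopy_apply_zero hρ w).symm.trans_le (hr _ hw)))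
    refine Cyl.isBounded_of_forall (isBounded_of_forall_apply_le (S := {q | (q : ℝ²) 0 ≤ N})
      fun q hq => hq) (M := N + 1) fun w hw => ⟨hxN w hw, ?_⟩
    have := Cyl.snd_le w
    rw [reparamDelay] at this
    linarith [hxN w hw, hρ.nonneg (nonneg_of_mem_c01 w.1.fst.2)]

theorem coneHomotopy_cylI0 (hp : ∀ q, -1 ≤ reparamDelay ρ q) (q : c01) :
    coneHomotopy hρ (cylI0 hp q) = q := by
  apply Subtype.ext
  change (max (ρ ((q : ℝ²) 0)) ((q : ℝ²) 0 - 0) / (q : ℝ²) 0) • (q : ℝ²) = q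
  have hx := nonneg_of_mem_c01 q.2
  rw [sub_zero, max_eq_right (by linarith [hρ.le_half hx]), div_self_smul_of_mem_c01 q.2]

theorem coneHomotopy_cylI1 (hp : ∀ q, -1 ≤ reparamDelay ρ q) (q : c01) :
    coneHomotopy hρ (cylI1 hp q) = coneReparam hρ q := by
  apply Subtype.ext
  change (max (ρ ((q : ℝ²) 0)) ((q : ℝ²) 0 - (reparamDelay ρ q + 1)) / (q : ℝ²) 0) • (q : ℝ²) =
    (ρ ((q : ℝ²) 0) / (q : ℝ²) 0) • (q : ℝ²)
  rw [reparamDelay, max_eq_left (by linarith)]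

theorem coarselyHomotopic_id_coneReparam : CoarselyHomotopic id (coneReparam hρ) :=
  ⟨reparamDelay ρ, fun q => by linarith [half_le_reparamDelay hρ q, nonneg_of_mem_c01 q.2],
    coarseMap_reparamDelay hρ, coneHomotopy hρ, coarseMap_coneHomotopy hρ,
    coneHomotopy_cylI0 hρ _, coneHomotopy_cylI1 hρ _⟩

end homotopy

section bands

variable {E : Type*} [NormedAddCommGroup E] [NormedSpace ℝ E] {s : Set E}

theorem exists_dist_add_dist_eq_of_mem_Icc (hs : Convex ℝ s) (φ : E →ₗ[ℝ] ℝ) {u v : E}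
    (hu : u ∈ s) (hv : v ∈ s) {b : ℝ} (hb : b ∈ Icc (φ u) (φ v)) :
    ∃ w ∈ s, φ w = b ∧ dist u w + dist w v = dist u v := by
  rcases hb.1.eq_or_lt with h | h
  · exact ⟨u, hu, h, by simp⟩
  have hφ : 0 < φ v - φ u := sub_pos.2 (h.trans_le hb.2)
  have hθ : (b - φ u) / (φ v - φ u) ∈ Icc (0 : ℝ) 1 :=
    ⟨div_nonneg (sub_nonneg.2 hb.1) hφ.le, (div_le_one hφ).2 (by linarith [hb.2])⟩
  refine ⟨AffineMap.lineMap u v ((b - φ u) / (φ v - φ u)), hs.lineMap_mem hu hv hθ, ?_, ?_⟩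
  · rw [AffineMap.lineMap_apply_module', map_add, map_smul, map_sub, smul_eq_mul,
      div_mul_cancel₀ _ hφ.ne']
    ring
  · rw [dist_left_lineMap, dist_lineMap_right, Real.norm_eq_abs, Real.norm_eq_abs,
      abs_of_nonneg hθ.1, abs_of_nonneg (sub_nonneg.2 hθ.2)]
    ring

variable {Y : Type*} [PseudoMetricSpace Y]

theorem lipschitzWith_one_of_bands (hs : Convex ℝ s) (φ : E →ₗ[ℝ] ℝ) (h : s → Y)
    (low : ∀ u v : s, φ u ≤ 1 → φ v ≤ 1 → dist (h u) (h v) ≤ dist u v)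
    (band : ∀ n : ℕ, ∀ u v : s, φ u ∈ Icc (n : ℝ) (n + 1) → φ v ∈ Icc (n : ℝ) (n + 1) →
      dist (h u) (h v) ≤ dist u v) :
    LipschitzWith 1 h := by
  -- cut the segment from `u` to `v` at the levels `φ = n` and add up
  have key := forall_le_of_bands
    (P := fun a b => ∀ u v : s, φ u = a → φ v = b → dist (h u) (h v) ≤ dist u v)
    (fun a b c hab hbc Pab Pbc u v hua hvc => by
      obtain ⟨w, hw, hwb, hsum⟩ :=
        exists_dist_add_dist_eq_of_mem_Icc hs φ u.2 v.2 (b := b) ⟨hua ▸ hab, hvc ▸ hbc⟩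
      calc dist (h u) (h v) ≤ dist (h u) (h ⟨w, hw⟩) + dist (h ⟨w, hw⟩) (h v) := dist_triangle _ _ _
        _ ≤ dist u ⟨w, hw⟩ + dist ⟨w, hw⟩ v := add_le_add (Pab _ _ hua hwb) (Pbc _ _ hwb hvc)
        _ = dist u v := hsum)
    (fun a b hab hb u v hua hvb => low u v (hua ▸ hab.trans hb) (hvb ▸ hb))
    (fun n a b ha hab hb u v hua hvb =>
      band n u v (hua ▸ ⟨ha, hab.trans hb⟩) (hvb ▸ ⟨ha.trans hab, hb⟩))
  refine LipschitzWith.mk_one fun u v => ?_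
  rcases le_total (φ u) (φ v) with huv | huv
  · exact key _ _ huv u v rfl rfl
  · rw [dist_comm, dist_comm u]
    exact key _ _ huv v u rfl rfl

end bands

theorem exists_monotone_lipschitz_bound {X Y : Type*} [PseudoMetricSpace X] [PseudoMetricSpace Y]
    (σ : X → ℝ) (f : X → Y)
    (hf : ∀ K : ℝ, 0 < K → ∃ L : ℝ, ∀ x x', σ x ≤ K → σ x' ≤ K →
      dist (f x) (f x') ≤ L * dist x x') :
    ∃ L : ℝ → ℝ, Monotone L ∧ (∀ K, 1 ≤ L K) ∧
      ∀ K x x', σ x ≤ K → σ x' ≤ K → dist (f x) (f x') ≤ L K * dist x x' := by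
  choose L hL using fun n : ℕ => hf (n + 1) n.cast_add_one_pos
  refine ⟨fun K => partialSups (fun n => max 1 (L n)) ⌈K⌉₊,
    fun K K' h => partialSups_monotone _ (Nat.ceil_mono h),
    fun K => (le_max_left _ (L ⌈K⌉₊)).trans (le_partialSups (fun n => max 1 (L n)) _),
    fun K x x' hx hx' => ?_⟩
  have hK : K ≤ ⌈K⌉₊ + 1 := by linarith [Nat.le_ceil K]
  exact (hL ⌈K⌉₊ x x' (hx.trans hK) (hx'.trans hK)).trans
    (mul_le_mul_of_nonneg_right ((le_max_right 1 _).trans (le_partialSups (fun n => max 1 (L n)) _))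
      dist_nonneg)

/-- The slope allowed to the reparametrization where its values reach height `K`. On a band
where `ρ` has slope and ratio `ρ x / x` at most `δ`, the radial rescaling is `5 δ`-Lipschitz
(`dist_coneReparam_le`), and `f` is `L K`-Lipschitz below height `K`. -/
def admissibleSlope (L : ℝ → ℝ) (K : ℝ) : ℝ := (5 * L K)⁻¹

def slowReparam (L : ℝ → ℝ) : ℝ → ℝ := interpolate (slowSeq (admissibleSlope L))

section slowReparam

variable {L : ℝ → ℝ} (hL_mono : Monotone L) (hL_one : ∀ K, 1 ≤ L K)
include hL_one

theorem admissibleSlope_pos (K : ℝ) : 0 < admissibleSlope L K := by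
  have := hL_one K
  unfold admissibleSlope
  positivity

theorem admissibleSlope_le_half (K : ℝ) : admissibleSlope L K ≤ 1 / 2 := by
  rw [admissibleSlope, one_div]
  exact inv_anti₀ two_pos (by linarith [hL_one K])

theorem mul_five_mul_admissibleSlope (K : ℝ) : L K * (5 * admissibleSlope L K) = 1 := by
  have := hL_one K
  rw [admissibleSlope, ← mul_assoc, mul_comm (L K), mul_inv_cancel₀ (by positivity)]

include hL_mono

theorem antitone_admissibleSlope : Antitone (admissibleSlope L) := fun K K' h =>
  inv_anti₀ (by linarith [hL_one K]) (by linarith [hL_mono h])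

theorem isSlowReparam_slowReparam : IsSlowReparam (slowReparam L) :=
  isSlowReparam_interpolate_slowSeq (antitone_admissibleSlope hL_mono hL_one)
    (admissibleSlope_pos hL_one) (admissibleSlope_le_half hL_one)

theorem dist_comp_coneReparam_slowReparam_le {Y : Type*} [PseudoMetricSpace Y] (f : c01 → Y)
    (hL : ∀ K (q q' : c01), (q : ℝ²) 0 ≤ K → (q' : ℝ²) 0 ≤ K →
      dist (f q) (f q') ≤ L K * dist q q')
    {n : ℕ} {u v : c01} (hu : (u : ℝ²) 0 ∈ Icc (n : ℝ) (n + 1))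
    (hv : (v : ℝ²) 0 ∈ Icc (n : ℝ) (n + 1)) :
    dist (f (coneReparam (isSlowReparam_slowReparam hL_mono hL_one) u))
      (f (coneReparam (isSlowReparam_slowReparam hL_mono hL_one) v)) ≤ dist u v := by
  set hρ := isSlowReparam_slowReparam hL_mono hL_one
  have hδ := antitone_admissibleSlope hL_mono hL_one
  have hδ₀ : ∀ K, 0 ≤ admissibleSlope L K := fun K => (admissibleSlope_pos hL_one K).le
  have hδ₁ : ∀ K, admissibleSlope L K ≤ 1 := fun K =>
    (admissibleSlope_le_half hL_one K).trans (by norm_num)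
  set K := slowSeq (admissibleSlope L) (n + 1)
  have height : ∀ q : c01, (q : ℝ²) 0 ∈ Icc (n : ℝ) (n + 1) → (coneReparam hρ q : ℝ²) 0 ≤ K :=
    fun q hq => by
      rw [coneReparam_apply_zero]
      calc slowReparam L ((q : ℝ²) 0) ≤ slowReparam L ((n + 1 : ℕ) : ℝ) :=
            hρ.monotone (by exact_mod_cast hq.2)
        _ = K := interpolate_natCast _
  have hg := dist_coneReparam_le hρ (hδ₀ K)
    (interpolate_slowSeq_le_mul hδ hδ₀ hδ₁ hu.1 hu.2)
    (interpolate_slowSeq_le_mul hδ hδ₀ hδ₁ hv.1 hv.2)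
    (abs_interpolate_slowSeq_sub_le hδ hδ₀ hδ₁ hu hv)
  calc dist (f (coneReparam hρ u)) (f (coneReparam hρ v))
      ≤ L K * dist (coneReparam hρ u) (coneReparam hρ v) := hL K _ _ (height u hu) (height v hv)
    _ ≤ L K * (5 * admissibleSlope L K * dist u v) :=
        mul_le_mul_of_nonneg_left hg (by linarith [hL_one K])
    _ = dist u v := by rw [← mul_assoc, mul_five_mul_admissibleSlope hL_one, one_mul]

theorem lipschitzWith_comp_coneReparam_slowReparam {Y : Type*} [PseudoMetricSpace Y]
    (f : c01 → Y) (hL : ∀ K (q q' : c01), (q : ℝ²) 0 ≤ K → (q' : ℝ²) 0 ≤ K →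
      dist (f q) (f q') ≤ L K * dist q q') :
    LipschitzWith 1 (f ∘ coneReparam (isSlowReparam_slowReparam hL_mono hL_one)) := by
  refine lipschitzWith_one_of_bands convex_c01 (EuclideanSpace.projₗ 0) _
    (fun u v hu hv => dist_comp_coneReparam_slowReparam_le hL_mono hL_one f hL (n := 0) ?_ ?_)
    fun n u v => dist_comp_coneReparam_slowReparam_le hL_mono hL_one f hL
  · exact ⟨by simpa using nonneg_of_mem_c01 u.2, by simpa using hu⟩
  · exact ⟨by simpa using nonneg_of_mem_c01 v.2, by simpa using hv⟩

end slowReparam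

/-- If `f : c([0,1]) → Y` is Lipschitz on each bounded region (with
constant `L_K` on the region of points with coordinates in `[0,K]`), then there is a
monotone surjective `ρ : [0,∞) → [0,∞)` such that the reparametrization
`g(x,t) = (ρ(x), t·ρ(x)/x)` is a coarse self-map of `c([0,1])` with `f ∘ g`
`1`-Lipschitz and `g` coarsely homotopic to the identity. -/
theorem reparametrize_to_lipschitz {Y : Type*} [MetricSpace Y] (f : c01 → Y)
    (hf : ∀ K : ℝ, 0 < K → ∃ L : ℝ, 0 < L ∧ ∀ q q' : c01,
      (q : EuclideanSpace ℝ (Fin 2)) 0 ≤ K → (q' : EuclideanSpace ℝ (Fin 2)) 0 ≤ K →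
      dist (f q) (f q') ≤ L * dist q q') :
    ∃ ρ : ℝ → ℝ, Monotone ρ ∧ (∀ x : ℝ, 0 ≤ x → 0 ≤ ρ x) ∧
      (∀ y : ℝ, 0 ≤ y → ∃ x : ℝ, 0 ≤ x ∧ ρ x = y) ∧
      ∃ g : c01 → c01,
        (∀ q : c01, ((g q : EuclideanSpace ℝ (Fin 2)) 0 = ρ ((q : EuclideanSpace ℝ (Fin 2)) 0)) ∧
          ((g q : EuclideanSpace ℝ (Fin 2)) 1 =
            (q : EuclideanSpace ℝ (Fin 2)) 1 * ρ ((q : EuclideanSpace ℝ (Fin 2)) 0) /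
              (q : EuclideanSpace ℝ (Fin 2)) 0)) ∧
        CoarseMap g ∧ LipschitzWith 1 (f ∘ g) ∧
        ∃ p : c01 → ℝ, ∃ hp : ∀ q, -1 ≤ p q, CoarseMap p ∧
          ∃ H : Cyl p → c01, CoarseMap H ∧
            (∀ q : c01, H (cylI0 hp q) = q) ∧ (∀ q : c01, H (cylI1 hp q) = g q) := by
  obtain ⟨L, hL_mono, hL_one, hL⟩ := exists_monotone_lipschitz_bound (fun q : c01 => (q : ℝ²) 0) f
    fun K hK => (hf K hK).imp fun _ => And.right
  have hρ := isSlowReparam_slowReparam hL_mono hL_one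
  exact ⟨slowReparam L, hρ.monotone, fun _ => hρ.nonneg, fun _ => hρ.exists_eq, coneReparam hρ,
    fun q => ⟨coneReparam_apply_zero hρ q, coneReparam_apply_one hρ q⟩, coarseMap_coneReparam hρ,
    lipschitzWith_comp_coneReparam_slowReparam hL_mono hL_one f hL,
    coarselyHomotopic_id_coneReparam hρ⟩
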